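/- arXiv:1605.09012 — 4 statements merged into one kernel-verified Lean document; each statement's English description precedes it below -/
import Mathlib

section
/- Let 0 < p_min ≤ p_max and let F : [p_min, p_max]^n → [p_min, p_max]^n be monotone and strictly sub-homogeneous. Then d(F(p), F(q)) < d(p, q) for all distinct p, q ∈ [p_min, p_max]^n, where d is the Thompson metric. -/
/-!
Put `d = d(p, q) > 0` and `λ = exp (-d) ∈ (0, 1)`, so that `λ • p ≤ q` and `λ • q ≤ p`.
Strict sub-homogeneity and monotonicity give `λ * F p < F (λ • p) ≤ F q`, i.e.
`log (F p i) - log (F q i) < d` for every `i`, and symmetrically; since there are finitely many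
coordinates, the maximum `d(F p, F q)` is still `< d`.
-/

open Set

/-- The Thompson metric on strictly positive vectors. -/
noncomputable def thompson {n : ℕ} (x y : Fin n → ℝ) : ℝ :=
  ⨆ i, |Real.log (x i) - Real.log (y i)|

open Real

lemma exp_neg_mul_le_of_log_sub_le {a b d : ℝ} (ha : 0 < a) (hb : 0 < b)
    (h : log a - log b ≤ d) : exp (-d) * a ≤ b :=
  calc exp (-d) * a = exp (-d + log a) := by rw [exp_add, exp_log ha]
    _ ≤ exp (log b) := exp_le_exp.mpr (by linarith)
    _ = b := exp_log hb

lemma log_sub_lt_of_exp_neg_mul_lt {a b d : ℝ} (ha : 0 < a) (h : exp (-d) * a < b) :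
    log a - log b < d := by
  have := log_lt_log (by positivity) h
  rw [log_mul (exp_pos _).ne' ha.ne', log_exp] at this
  linarith

section Thompson

variable {n : ℕ}

lemma thompson_comm (x y : Fin n → ℝ) : thompson x y = thompson y x := by
  simp only [thompson, abs_sub_comm]

lemma abs_log_sub_le_thompson (x y : Fin n → ℝ) (i : Fin n) :
    |log (x i) - log (y i)| ≤ thompson x y :=
  le_ciSup (f := fun i => |log (x i) - log (y i)|) (finite_range _).bddAbove i

lemma thompson_lt_of_forall_lt {x y : Fin n → ℝ} {c : ℝ} (hc : 0 < c)
    (h : ∀ i, |log (x i) - log (y i)| < c) : thompson x y < c := by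
  rcases isEmpty_or_nonempty (Fin n) with hn | hn
  · simpa [thompson] using hc
  · obtain ⟨j, hj⟩ := Finite.exists_max fun i => |log (x i) - log (y i)|
    exact (ciSup_le hj).trans_lt (h j)

lemma thompson_pos_of_ne {x y : Fin n → ℝ} (hx : ∀ i, 0 < x i) (hy : ∀ i, 0 < y i)
    (hne : x ≠ y) : 0 < thompson x y := by
  obtain ⟨i, hi⟩ := Function.ne_iff.mp hne
  have hlog : log (x i) ≠ log (y i) := fun h => hi (log_injOn_pos (hx i) (hy i) h)
  exact (abs_pos.mpr (sub_ne_zero.mpr hlog)).trans_le (abs_log_sub_le_thompson x y i)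

lemma exp_neg_thompson_smul_le {x y : Fin n → ℝ} (hx : ∀ i, 0 < x i) (hy : ∀ i, 0 < y i) :
    exp (-thompson x y) • x ≤ y := fun i =>
  exp_neg_mul_le_of_log_sub_le (hx i) (hy i)
    ((le_abs_self _).trans (abs_log_sub_le_thompson x y i))

variable {F : (Fin n → ℝ) → Fin n → ℝ}

lemma log_map_sub_lt_of_exp_neg_smul_le (hmono : Monotone F)
    (hsub : ∀ p : Fin n → ℝ, (∀ i, 0 < p i) → ∀ l ∈ Ioo (0 : ℝ) 1,
      ∀ i, l * F p i < F (l • p) i)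
    {x y : Fin n → ℝ} (hx : ∀ i, 0 < x i) (hFx : ∀ i, 0 < F x i) {d : ℝ} (hd : 0 < d)
    (hxy : exp (-d) • x ≤ y) (i : Fin n) : log (F x i) - log (F y i) < d :=
  log_sub_lt_of_exp_neg_mul_lt (hFx i)
    ((hsub x hx _ ⟨exp_pos _, Real.exp_lt_one_iff.mpr (neg_neg_of_pos hd)⟩ i).trans_le
      (hmono hxy i))

theorem thompson_map_lt_of_ne (hmono : Monotone F)
    (hsub : ∀ p : Fin n → ℝ, (∀ i, 0 < p i) → ∀ l ∈ Ioo (0 : ℝ) 1,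
      ∀ i, l * F p i < F (l • p) i)
    {p q : Fin n → ℝ} (hp : ∀ i, 0 < p i) (hq : ∀ i, 0 < q i)
    (hFp : ∀ i, 0 < F p i) (hFq : ∀ i, 0 < F q i) (hne : p ≠ q) :
    thompson (F p) (F q) < thompson p q := by
  have hd := thompson_pos_of_ne hp hq hne
  refine thompson_lt_of_forall_lt hd fun i => abs_sub_lt_iff.mpr ⟨?_, ?_⟩
  · exact log_map_sub_lt_of_exp_neg_smul_le hmono hsub hp hFp hd
      (exp_neg_thompson_smul_le hp hq) i
  · rw [thompson_comm] at hd ⊢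
    exact log_map_sub_lt_of_exp_neg_smul_le hmono hsub hq hFq hd
      (exp_neg_thompson_smul_le hq hp) i

end Thompson

theorem stmt7_general (n : ℕ) (pmin pmax : ℝ) (h0 : 0 < pmin)
    (F : (Fin n → ℝ) → (Fin n → ℝ))
    (hbd : ∀ p ∈ Icc (fun _ : Fin n => pmin) (fun _ => pmax),
      F p ∈ Icc (fun _ : Fin n => pmin) (fun _ => pmax))
    (hmono : ∀ p q : Fin n → ℝ, q ≤ p → F q ≤ F p)
    (hsub : ∀ p : Fin n → ℝ, (∀ i, 0 < p i) → ∀ l : ℝ, l ∈ Ioo (0:ℝ) 1 →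
      ∀ i, l * F p i < F (l • p) i) :
    ∀ p ∈ Icc (fun _ : Fin n => pmin) (fun _ => pmax),
    ∀ q ∈ Icc (fun _ : Fin n => pmin) (fun _ => pmax),
      p ≠ q → thompson (F p) (F q) < thompson p q := by
  have pos : ∀ r ∈ Icc (fun _ : Fin n => pmin) (fun _ => pmax), ∀ i, 0 < r i :=
    fun r hr i => h0.trans_le (hr.1 i)
  intro p hp q hq hne
  exact thompson_map_lt_of_ne (fun p q h => hmono q p h) hsub (pos p hp) (pos q hq)
    (pos _ (hbd p hp)) (pos _ (hbd q hq)) hne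

/-- A monotone strictly sub-homogeneous price-bounded update strictly decreases
Thompson distances between distinct points. -/
theorem stmt7 (n : ℕ) (pmin pmax : ℝ) (h0 : 0 < pmin) (h1 : pmin ≤ pmax)
    (F : (Fin n → ℝ) → (Fin n → ℝ))
    (hbd : ∀ p ∈ Icc (fun _ : Fin n => pmin) (fun _ => pmax),
      F p ∈ Icc (fun _ : Fin n => pmin) (fun _ => pmax))
    (hmono : ∀ p q : Fin n → ℝ, q ≤ p → F q ≤ F p)
    (hsub : ∀ p : Fin n → ℝ, (∀ i, 0 < p i) → ∀ l : ℝ, l ∈ Ioo (0:ℝ) 1 →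
      ∀ i, l * F p i < F (l • p) i) :
    ∀ p ∈ Icc (fun _ : Fin n => pmin) (fun _ => pmax),
    ∀ q ∈ Icc (fun _ : Fin n => pmin) (fun _ => pmax),
      p ≠ q → thompson (F p) (F q) < thompson p q :=
  stmt7_general n pmin pmax h0 F hbd hmono hsub
end

section
/- Consider the best-response map g(α, p) = α − Σ_i b_i·(c_{ij}/α)^ε/((c_{ij}/α)^ε + Σ_{k≠j}(c_{ik}/p_k)^ε) for ε > 0. The best-response price F_j(p), defined as the unique α > 0 with g(α,p) = 0, is monotone in p: if p ≥ q coordinatewise (with p, q strictly positive), then F_j(p) ≥ F_j(q). -/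
/-!
If the price `a` against `p` were below the price `β` against `q`, then every buyer's share of
budget spent on good `j` would be at least as large at `(a, p)` as at `(β, q)`: a lower own
price and higher competing prices both raise `(c/α)^ε` relative to the sum of the others.
Summing over buyers gives `β ≤ a`, a contradiction.
-/

open Finset

lemma div_add_le_div_add {x x' d d' : ℝ} (hx' : 0 ≤ x') (hxx : x' ≤ x) (hd : 0 ≤ d)
    (hdd : d ≤ d') : x' / (x' + d') ≤ x / (x + d) := by
  rcases hx'.eq_or_lt with rfl | hx'pos
  · simp only [zero_add, zero_div]
    exact div_nonneg (hx'.trans hxx) (by linarith)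
  · rw [div_le_div_iff₀ (by linarith) (by linarith)]
    nlinarith [mul_le_mul hxx hdd hd (hx'.trans hxx)]

lemma div_rpow_le_div_rpow_of_le {c x y ε : ℝ} (hc : 0 ≤ c) (hx : 0 < x) (hxy : x ≤ y)
    (hε : 0 ≤ ε) : (c / y) ^ ε ≤ (c / x) ^ ε :=
  Real.rpow_le_rpow (div_nonneg hc (hx.trans_le hxy).le) (div_le_div_of_nonneg_left hc hx hxy) hε

lemma ces_share_le_ces_share {ι : Type*} (s : Finset ι) {ε u α α' : ℝ} {v p q : ι → ℝ}
    (hε : 0 ≤ ε) (hu : 0 ≤ u) (hv : ∀ k, 0 ≤ v k) (hα : 0 < α) (hαα' : α ≤ α')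
    (hq : ∀ k, 0 < q k) (hpq : ∀ k, q k ≤ p k) :
    (u / α') ^ ε / ((u / α') ^ ε + ∑ k ∈ s, (v k / q k) ^ ε) ≤
      (u / α) ^ ε / ((u / α) ^ ε + ∑ k ∈ s, (v k / p k) ^ ε) :=
  div_add_le_div_add (Real.rpow_nonneg (div_nonneg hu (hα.trans_le hαα').le) ε)
    (div_rpow_le_div_rpow_of_le hu hα hαα' hε)
    (sum_nonneg fun k _ => Real.rpow_nonneg (div_nonneg (hv k) ((hq k).trans_le (hpq k)).le) ε)
    (sum_le_sum fun k _ => div_rpow_le_div_rpow_of_le (hv k) (hq k) (hpq k) hε)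

theorem stmt12_general (m n : ℕ) (ε : ℝ) (hε : 0 < ε)
    (b : Fin m → ℝ) (c : Fin m → Fin n → ℝ) (j : Fin n)
    (p q : Fin n → ℝ) (hb : ∀ i, 0 < b i) (hc : ∀ i k, 0 ≤ c i k)
    (hq : ∀ k, 0 < q k) (hpq : ∀ k, q k ≤ p k)
    (a β : ℝ) (ha : 0 < a)
    (hroot_p : a = ∑ i, b i * ((c i j / a) ^ ε /
      ((c i j / a) ^ ε + ∑ k ∈ univ.erase j, (c i k / p k) ^ ε)))
    (hroot_q : β = ∑ i, b i * ((c i j / β) ^ ε /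
      ((c i j / β) ^ ε + ∑ k ∈ univ.erase j, (c i k / q k) ^ ε))) :
    β ≤ a := by
  by_contra! hlt
  refine hlt.not_ge ?_
  rw [hroot_q, hroot_p]
  exact sum_le_sum fun i _ => mul_le_mul_of_nonneg_left
    (ces_share_le_ces_share _ hε.le (hc i j) (hc i) ha hlt.le hq hpq) (hb i).le

/-- Monotonicity of the best-response price: if `p ≥ q` coordinatewise, then
the market-clearing price of good `j` against `p` is at least that against `q`. -/
theorem stmt12 (m n : ℕ) (ε : ℝ) (hε : 0 < ε)
    (b : Fin m → ℝ) (c : Fin m → Fin n → ℝ) (j : Fin n)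
    (p q : Fin n → ℝ) (hb : ∀ i, 0 < b i) (hc : ∀ i k, 0 ≤ c i k)
    (hq : ∀ k, 0 < q k) (hpq : ∀ k, q k ≤ p k)
    (a β : ℝ) (ha : 0 < a) (hβ : 0 < β)
    (hroot_p : a = ∑ i, b i * ((c i j / a) ^ ε /
      ((c i j / a) ^ ε + ∑ k ∈ univ.erase j, (c i k / p k) ^ ε)))
    (hroot_q : β = ∑ i, b i * ((c i j / β) ^ ε /
      ((c i j / β) ^ ε + ∑ k ∈ univ.erase j, (c i k / q k) ^ ε))) :
    β ≤ a :=
  stmt12_general m n ε hε b c j p q hb hc hq hpq a β ha hroot_p hroot_q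
end

section
/- With ε > 0, the best-response price F_j is strictly sub-homogeneous: for all strictly positive price vectors p and all λ ∈ (0,1), F_j(λp) > λ·F_j(p), provided F_j(p) > 0. -/
open Finset

/-!
The spending on good `j` depends on its price `α` and the other prices `q` only through the
ratios `c i j / α` and `c i k / q k`, so it is unchanged when `α` and `q` are scaled together by
`λ`; and it is antitone in `α`. If `F_j(λp) ≤ λ F_j(p)`, these two facts would give
`F_j(λp) = spending(λp, F_j(λp)) ≥ spending(λp, λ F_j(p)) = spending(p, F_j(p)) = F_j(p) > λ F_j(p)`.
-/

lemma div_add_le_div_add_of_le {x y d : ℝ} (hd : 0 ≤ d) (hx : 0 ≤ x) (hxy : x ≤ y) :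
    x / (x + d) ≤ y / (y + d) := by
  rcases (add_nonneg hx hd).eq_or_lt with h | h
  · rw [← h, div_zero]
    exact div_nonneg (hx.trans hxy) (by linarith)
  · rw [div_le_div_iff₀ h (by linarith)]
    nlinarith

section Spending

variable {ι κ : Type*} [Fintype ι] [Fintype κ] [DecidableEq κ]

/-- Total spending on good `j` when it costs `α` and the other goods cost `q`. -/
noncomputable def spending (ε : ℝ) (b : ι → ℝ) (c : ι → κ → ℝ) (j : κ) (q : κ → ℝ) (α : ℝ) :
    ℝ :=
  ∑ i, b i * ((c i j / α) ^ ε / ((c i j / α) ^ ε + ∑ k ∈ univ.erase j, (c i k / q k) ^ ε))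

variable {ε : ℝ} {b : ι → ℝ} {c : ι → κ → ℝ} {q : κ → ℝ}

lemma spending_mul_mul (j : κ) (hc : ∀ i k, 0 ≤ c i k) (hq : ∀ k, 0 ≤ q k) {l α : ℝ}
    (hl : 0 < l) (hα : 0 ≤ α) :
    spending ε b c j (fun k => l * q k) (l * α) = spending ε b c j q α := by
  have hscale : ∀ {x y : ℝ}, 0 ≤ x → 0 ≤ y → (x / (l * y)) ^ ε = (x / y) ^ ε / l ^ ε :=
    fun hx hy => by rw [div_mul_eq_div_div_swap, Real.div_rpow (div_nonneg hx hy) hl.le]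
  refine sum_congr rfl fun i _ => congrArg (b i * ·) ?_
  rw [hscale (hc i j) hα, sum_congr rfl fun k _ => hscale (hc i k) (hq k), ← sum_div,
    ← add_div, div_div_div_cancel_right₀ (Real.rpow_pos_of_pos hl ε).ne']

lemma spending_antitoneOn (j : κ) (hε : 0 ≤ ε) (hb : ∀ i, 0 ≤ b i) (hc : ∀ i k, 0 ≤ c i k)
    (hq : ∀ k, 0 ≤ q k) : AntitoneOn (spending ε b c j q) (Set.Ioi 0) := by
  intro α (hα : 0 < α) β _ hαβ
  refine sum_le_sum fun i _ => mul_le_mul_of_nonneg_left ?_ (hb i)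
  refine div_add_le_div_add_of_le
    (sum_nonneg fun k _ => Real.rpow_nonneg (div_nonneg (hc i k) (hq k)) ε)
    (Real.rpow_nonneg (div_nonneg (hc i j) (hα.trans_le hαβ).le) ε) ?_
  exact Real.rpow_le_rpow (div_nonneg (hc i j) (hα.trans_le hαβ).le)
    (div_le_div_of_nonneg_left (hc i j) hα hαβ) hε

end Spending

/-- Strict sub-homogeneity of the best-response price: scaling all other
prices by `λ ∈ (0,1)` yields a best-response price strictly greater than
`λ` times the original best-response price. -/
theorem stmt13 (m n : ℕ) (ε : ℝ) (hε : 0 < ε)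
    (b : Fin m → ℝ) (c : Fin m → Fin n → ℝ) (j : Fin n)
    (p : Fin n → ℝ) (hb : ∀ i, 0 < b i) (hc : ∀ i k, 0 ≤ c i k)
    (hp : ∀ k, 0 < p k) (l : ℝ) (hl : l ∈ Set.Ioo (0:ℝ) 1)
    (a a' : ℝ) (ha : 0 < a) (ha' : 0 < a')
    (hroot : a = ∑ i, b i * ((c i j / a) ^ ε /
      ((c i j / a) ^ ε + ∑ k ∈ univ.erase j, (c i k / p k) ^ ε)))
    (hroot' : a' = ∑ i, b i * ((c i j / a') ^ ε /
      ((c i j / a') ^ ε + ∑ k ∈ univ.erase j, (c i k / (l * p k)) ^ ε))) :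
    l * a < a' := by
  obtain ⟨hl0, hl1⟩ := hl
  have hp' : ∀ k, 0 ≤ p k := fun k => (hp k).le
  by_contra! hle
  have ha_le_a' : a ≤ a' :=
    calc a = spending ε b c j p a := hroot
      _ = spending ε b c j (fun k => l * p k) (l * a) :=
        (spending_mul_mul j hc hp' hl0 ha.le).symm
      _ ≤ spending ε b c j (fun k => l * p k) a' :=
        spending_antitoneOn j hε.le (fun i => (hb i).le) hc
          (fun k => (mul_pos hl0 (hp k)).le) ha' (mul_pos hl0 ha) hle
      _ = a' := hroot'.symm
  exact (mul_lt_of_lt_one_left ha hl1).not_ge (ha_le_a'.trans hle)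
end

section
/- With ε > 0, set C_{ij} = b_i·c_{ij}^ε / Σ_k c_{ik}^ε and p_min = min{C_{ij} : c_{ij} > 0}. If all prices p_k ≥ p_min for k ≠ j, then for any buyer i with c_{ij} > 0 and any price q_j < p_min, the demand of buyer i alone for good j exceeds 1; hence the market-clearing best-response price satisfies F_j(p) ≥ p_min. -/
open Finset

/-- Lower bound on the best-response price. If `pmin` is below every
`C_{ij} = b_i c_{ij}^ε / ∑_k c_{ik}^ε` (over buyers with `c_{ij} > 0`) and all
other prices are at least `pmin`, then at any price `q_j < pmin` a single buyer
with `c_{ij} > 0` demands more than one unit of good `j`; consequently the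
market-clearing price is at least `pmin`. -/
theorem stmt15 (m n : ℕ) (ε : ℝ) (hε : 0 < ε)
    (b : Fin m → ℝ) (c : Fin m → Fin n → ℝ) (j : Fin n) (p : Fin n → ℝ)
    (hb : ∀ i, 0 < b i) (hc : ∀ i k, 0 ≤ c i k)
    (pmin : ℝ) (hpmin0 : 0 < pmin)
    (hpminC : ∀ i, 0 < c i j → pmin ≤ b i * c i j ^ ε / ∑ k, c i k ^ ε)
    (hp : ∀ k, k ≠ j → pmin ≤ p k) (hppos : ∀ k, 0 < p k)
    (hex : ∃ i, 0 < c i j) :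
    (∀ i, 0 < c i j → ∀ qj : ℝ, 0 < qj → qj < pmin →
      1 < b i / qj * ((c i j / qj) ^ ε /
        ((c i j / qj) ^ ε + ∑ k ∈ univ.erase j, (c i k / p k) ^ ε))) ∧
    (∀ a : ℝ, 0 < a →
      (∑ i, b i / a * ((c i j / a) ^ ε /
        ((c i j / a) ^ ε + ∑ k ∈ univ.erase j, (c i k / p k) ^ ε))) = 1 →
      pmin ≤ a) := by
  have key : ∀ i, 0 < c i j → ∀ qj : ℝ, 0 < qj → qj < pmin →
      1 < b i / qj * ((c i j / qj) ^ ε /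
        ((c i j / qj) ^ ε + ∑ k ∈ univ.erase j, (c i k / p k) ^ ε)) := by
    intro i hci qj hq hqp
    set X := (c i j / qj) ^ ε with hXdef
    set S := ∑ k ∈ univ.erase j, (c i k / p k) ^ ε with hSdef
    have hqε : 0 < qj ^ ε := Real.rpow_pos_of_pos hq ε
    have hX : 0 < X := Real.rpow_pos_of_pos (div_pos hci hq) ε
    have hS : 0 ≤ S := Finset.sum_nonneg fun k _ =>
      Real.rpow_nonneg (div_nonneg (hc i k) (hppos k).le) ε
    have hcj : 0 < c i j ^ ε := Real.rpow_pos_of_pos hci ε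
    have hTnn : ∀ k ∈ (univ : Finset (Fin n)), 0 ≤ c i k ^ ε := fun k _ =>
      Real.rpow_nonneg (hc i k) ε
    have hT : 0 < ∑ k, c i k ^ ε :=
      Finset.sum_pos' hTnn ⟨j, mem_univ j, hcj⟩
    set E := ∑ k ∈ univ.erase j, c i k ^ ε with hEdef
    have hE : 0 ≤ E := Finset.sum_nonneg fun k _ => Real.rpow_nonneg (hc i k) ε
    have hTsplit : (∑ k, c i k ^ ε) = c i j ^ ε + E :=
      (Finset.add_sum_erase univ (fun k => c i k ^ ε) (mem_univ j)).symm
    have hXeq : X = c i j ^ ε / qj ^ ε := Real.div_rpow (hc i j) hq.le ε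
    have hS2 : S ≤ E / qj ^ ε := by
      rw [hEdef, Finset.sum_div]
      apply Finset.sum_le_sum
      intro k hk
      have hkj : k ≠ j := (Finset.mem_erase.mp hk).1
      have hpk : qj ≤ p k := le_trans hqp.le (hp k hkj)
      have h1 : c i k / p k ≤ c i k / qj := by
        gcongr
        exact hc i k
      calc (c i k / p k) ^ ε ≤ (c i k / qj) ^ ε :=
            Real.rpow_le_rpow (div_nonneg (hc i k) (hppos k).le) h1 hε.le
        _ = c i k ^ ε / qj ^ ε := Real.div_rpow (hc i k) hq.le ε
    have hC : qj < b i * c i j ^ ε / ∑ k, c i k ^ ε :=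
      lt_of_lt_of_le hqp (hpminC i hci)
    have hfrac : c i j ^ ε / (∑ k, c i k ^ ε) ≤ X / (X + S) := by
      rw [div_le_div_iff₀ hT (by positivity)]
      rw [hTsplit, hXeq]
      have h2 : c i j ^ ε * S ≤ c i j ^ ε * (E / qj ^ ε) :=
        mul_le_mul_of_nonneg_left hS2 hcj.le
      have h3 : c i j ^ ε * (E / qj ^ ε) = c i j ^ ε / qj ^ ε * E := by ring
      nlinarith [hcj, hqε, hE]
    have h4 : (1:ℝ) < b i / qj * (c i j ^ ε / ∑ k, c i k ^ ε) := by
      have : b i / qj * (c i j ^ ε / ∑ k, c i k ^ ε)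
          = (b i * c i j ^ ε / ∑ k, c i k ^ ε) / qj := by ring
      rw [this]
      exact (one_lt_div hq).mpr hC
    have h5 : b i / qj * (c i j ^ ε / ∑ k, c i k ^ ε) ≤ b i / qj * (X / (X + S)) :=
      mul_le_mul_of_nonneg_left hfrac (div_nonneg (hb i).le hq.le)
    linarith
  refine ⟨key, ?_⟩
  intro a ha heq
  by_contra hcon
  push_neg at hcon
  obtain ⟨i0, hi0⟩ := hex
  have h1 : 1 < b i0 / a * ((c i0 j / a) ^ ε /
      ((c i0 j / a) ^ ε + ∑ k ∈ univ.erase j, (c i0 k / p k) ^ ε)) :=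
    key i0 hi0 a ha hcon
  have h2 : b i0 / a * ((c i0 j / a) ^ ε /
      ((c i0 j / a) ^ ε + ∑ k ∈ univ.erase j, (c i0 k / p k) ^ ε)) ≤
      ∑ i, b i / a * ((c i j / a) ^ ε /
        ((c i j / a) ^ ε + ∑ k ∈ univ.erase j, (c i k / p k) ^ ε)) := by
    apply Finset.single_le_sum (f := fun i => b i / a * ((c i j / a) ^ ε /
        ((c i j / a) ^ ε + ∑ k ∈ univ.erase j, (c i k / p k) ^ ε)))
    · intro i _
      have hnum : (0:ℝ) ≤ (c i j / a) ^ ε := Real.rpow_nonneg (div_nonneg (hc i j) ha.le) ε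
      have hden : (0:ℝ) ≤ (c i j / a) ^ ε + ∑ k ∈ univ.erase j, (c i k / p k) ^ ε :=
        add_nonneg hnum (Finset.sum_nonneg fun k _ =>
          Real.rpow_nonneg (div_nonneg (hc i k) (hppos k).le) ε)
      exact mul_nonneg (div_nonneg (hb i).le ha.le) (div_nonneg hnum hden)
    · exact mem_univ i0
  linarith
end
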